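/- Let m and n_yq be natural numbers with n_yq ≤ m, Θ_w = diag_m(J), Θ_yq = diag_{n_yq}(J). If a real 2n_yq×2m matrix D_q satisfies D_q·Θ_w·D_qᵀ = Θ_yq, then there exists a real (2m−2n_yq)×2m matrix N such that the stacked 2m×2m matrix Ṽ = [D_q; N] is symplectic, i.e. Ṽ·Θ_w·Ṽᵀ = Θ_w. -/

import Mathlib

open Matrix

/-- The 2×2 real matrix `J = [[0,1],[-1,0]]`. -/
def Jmat : Matrix (Fin 2) (Fin 2) ℝ := !![0, 1; -1, 0]

/-- `diagJ k` is the `2k × 2k` block-diagonal real matrix with `k` copies of `J`. -/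
def diagJ (k : ℕ) : Matrix (Fin (2 * k)) (Fin (2 * k)) ℝ :=
  Matrix.of fun i j =>
    if i.val / 2 = j.val / 2 then
      Jmat ⟨i.val % 2, Nat.mod_lt _ two_pos⟩ ⟨j.val % 2, Nat.mod_lt _ two_pos⟩
    else 0

/-! The rows of `D_q` span a subspace on which the symplectic form is nondegenerate, so its
symplectic orthogonal complement is a complement and the form stays nondegenerate on it. For a
basis `M` of that complement, `M Θ_w Mᵀ` is then a nondegenerate skew matrix, and Darboux's
theorem (split off a hyperbolic pair `u, B⁻¹u` of the skew matrix `B` at a time) gives `C` with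
`C (M Θ_w Mᵀ) Cᵀ = diag(J, …, J)`; the completion is `N = C M`. -/

-- For odd `s` the last row and column of `blockJ K s` vanish.
def blockJ (K : Type*) [Ring K] (s : ℕ) : Matrix (Fin s) (Fin s) K :=
  of fun i j =>
    if i.val / 2 = j.val / 2 then
      !![0, 1; -1, 0] ⟨i.val % 2, Nat.mod_lt _ two_pos⟩ ⟨j.val % 2, Nat.mod_lt _ two_pos⟩
    else 0

theorem diagJ_eq_blockJ (k : ℕ) : diagJ k = blockJ ℝ (2 * k) := rfl

section blockJ

variable {K : Type*} [Ring K]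

theorem blockJ_two : blockJ K 2 = !![0, 1; -1, 0] := by
  ext i j
  fin_cases i <;> fin_cases j <;> rfl

theorem transpose_blockJ (s : ℕ) : (blockJ K s)ᵀ = -blockJ K s := by
  have hJ (a b : Fin 2) : ![![(0 : K), 1], ![-1, 0]] b a = -![![(0 : K), 1], ![-1, 0]] a b := by
    fin_cases a <;> fin_cases b <;> simp
  ext i j
  simp only [blockJ, transpose_apply, Matrix.neg_apply, of_apply, eq_comm (a := j.val / 2)]
  split_ifs
  · exact hJ _ _
  · simp

theorem blockJ_submatrix_finSumFinEquiv {a b s : ℕ} (hab : a + b = s) (ha : Even a) :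
    (blockJ K s).submatrix (finSumFinEquiv.trans (finCongr hab))
        (finSumFinEquiv.trans (finCongr hab)) =
      fromBlocks (blockJ K a) 0 0 (blockJ K b) := by
  obtain ⟨a, rfl⟩ := even_iff_two_dvd.mp ha
  ext (i | i) (j | j) <;>
    simp only [blockJ, of_apply, submatrix_apply, Equiv.trans_apply, finCongr_apply,
      finSumFinEquiv_apply_left, finSumFinEquiv_apply_right, Fin.val_cast, Fin.val_castAdd,
      Fin.val_natAdd, Nat.mul_add_div two_pos, Nat.add_left_cancel_iff, Nat.mul_add_mod_self_left,
      fromBlocks_apply₁₁, fromBlocks_apply₁₂, fromBlocks_apply₂₁, fromBlocks_apply₂₂,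
      Matrix.zero_apply, ite_eq_right_iff]
  all_goals exact fun h => absurd h (by omega)

end blockJ

theorem det_blockJ_two_mul {K : Type*} [CommRing K] (k : ℕ) : (blockJ K (2 * k)).det = 1 := by
  induction k with
  | zero => exact det_fin_zero
  | succ k ih =>
    rw [← det_submatrix_equiv_self
        (finSumFinEquiv.trans (finCongr (by omega : 2 + 2 * k = 2 * (k + 1)))),
      blockJ_submatrix_finSumFinEquiv _ even_two, det_fromBlocks_zero₂₁, ih, blockJ_two,
      det_fin_two_of]
    norm_num

theorem isUnit_blockJ_two_mul {K : Type*} [CommRing K] (k : ℕ) : IsUnit (blockJ K (2 * k)) := by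
  rw [isUnit_iff_isUnit_det, det_blockJ_two_mul]
  exact isUnit_one

section Skew

variable {K : Type*} [CommRing K] {l m n : Type*} [Fintype n] {B : Matrix n n K}

theorem mul_mul_transpose_apply (A : Matrix l n K) (B : Matrix n n K) (C : Matrix m n K)
    (i : l) (j : m) : (A * B * Cᵀ) i j = A i ⬝ᵥ B *ᵥ C j := by
  rw [mul_apply', dotProduct_mulVec]
  rfl

theorem transpose_mul_mul_transpose_of_skew (hB : Bᵀ = -B) (D : Matrix l n K)
    (M : Matrix m n K) : (D * B * Mᵀ)ᵀ = -(M * B * Dᵀ) := by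
  rw [transpose_mul, transpose_mul, transpose_transpose, hB, Matrix.neg_mul, Matrix.mul_neg,
    Matrix.mul_assoc]

theorem dotProduct_mulVec_comm_of_skew (hB : Bᵀ = -B) (x y : n → K) :
    x ⬝ᵥ B *ᵥ y = -(y ⬝ᵥ B *ᵥ x) := by
  rw [dotProduct_mulVec, ← mulVec_transpose, hB, neg_mulVec, neg_dotProduct, dotProduct_comm]

theorem dotProduct_mulVec_self_of_skew [IsDomain K] [NeZero (2 : K)] (hB : Bᵀ = -B)
    (x : n → K) : x ⬝ᵥ B *ᵥ x = 0 := by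
  have h := dotProduct_mulVec_comm_of_skew hB x x
  rw [eq_neg_iff_add_eq_zero, ← two_mul] at h
  exact (mul_eq_zero.mp h).resolve_left two_ne_zero

theorem fromRows_mul_mul_transpose_fromRows (hB : Bᵀ = -B) {D : Matrix l n K}
    {M : Matrix m n K} (h : D * B * Mᵀ = 0) :
    fromRows D M * B * (fromRows D M)ᵀ = fromBlocks (D * B * Dᵀ) 0 0 (M * B * Mᵀ) := by
  have h' : M * B * Dᵀ = 0 := by
    rw [← neg_eq_zero, ← transpose_mul_mul_transpose_of_skew hB, h, transpose_zero]
  rw [transpose_fromRows, fromRows_mul, fromRows_mul_fromCols, h, h']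

theorem fromRows_mul_mul_transpose_fromRows_mul (hB : Bᵀ = -B) {D : Matrix l n K}
    {M : Matrix m n K} (h : D * B * Mᵀ = 0) {m' : Type*} [Fintype m] (C : Matrix m' m K) :
    fromRows D (C * M) * B * (fromRows D (C * M))ᵀ =
      fromBlocks (D * B * Dᵀ) 0 0 (C * (M * B * Mᵀ) * Cᵀ) := by
  rw [fromRows_mul_mul_transpose_fromRows hB (by rw [transpose_mul, ← Matrix.mul_assoc, h,
    Matrix.zero_mul])]
  simp only [transpose_mul, Matrix.mul_assoc]

end Skew

theorem submatrix_mul_mul_transpose_submatrix {K l m n : Type*} [CommRing K] [Fintype n]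
    (A : Matrix m n K) (B : Matrix n n K) (e : l ≃ m) :
    A.submatrix e id * B * (A.submatrix e id)ᵀ = (A * B * Aᵀ).submatrix e e := by
  rw [transpose_submatrix, ← submatrix_id_id B, ← submatrix_mul _ _ _ _ _ Function.bijective_id,
    ← submatrix_mul _ _ _ _ _ Function.bijective_id, submatrix_id_id]

section Field

variable {K : Type*} [Field K]

theorem exists_linearIndependent_rows_mul_eq_zero {r c s : ℕ} (hrcs : r + c ≤ s)
    (A : Matrix (Fin s) (Fin r) K) :
    ∃ M : Matrix (Fin c) (Fin s) K, M * A = 0 ∧ LinearIndependent K M.row := by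
  let f := A.vecMulLinear
  have hker : c ≤ Module.finrank K (LinearMap.ker f) := by
    have hsum := f.finrank_range_add_finrank_ker
    have hrange := (LinearMap.range f).finrank_le
    rw [Module.finrank_fin_fun] at hsum hrange
    omega
  obtain ⟨v, hv⟩ := exists_linearIndependent_of_le_finrank hker
  refine ⟨of fun i => (v i : Fin s → K), ?_, hv.map' _ (LinearMap.ker f).ker_subtype⟩
  ext i j
  exact congrFun (v i).2 j

theorem linearIndependent_rows_fromRows {l m n : Type*} [Fintype l] [Fintype m] [Fintype n]
    [DecidableEq l] {D : Matrix l n K} {M : Matrix m n K} (A : Matrix n l K)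
    (hDA : IsUnit (D * A)) (hMA : M * A = 0) (hM : LinearIndependent K M.row) :
    LinearIndependent K (fromRows D M).row := by
  rw [← vecMul_injective_iff, ← coe_vecMulLinear, injective_iff_map_eq_zero]
  intro c hc
  replace hc : c ∘ Sum.inl ᵥ* D + c ∘ Sum.inr ᵥ* M = 0 := by rw [← vecMul_fromRows]; exact hc
  have hD : c ∘ Sum.inl = 0 := by
    apply vecMul_injective_of_isUnit hDA
    simpa [add_vecMul, vecMul_vecMul, hMA] using congrArg (· ᵥ* A) hc
  have hM' : c ∘ Sum.inr = 0 := by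
    apply vecMul_injective_iff.mpr hM
    simpa [hD] using hc
  ext (i | i)
  · exact congrFun hD i
  · exact congrFun hM' i

theorem exists_orthogonal_complement {r c s : ℕ} (hrcs : r + c = s)
    {B : Matrix (Fin s) (Fin s) K} (hB : Bᵀ = -B) (hBu : IsUnit B)
    {D : Matrix (Fin r) (Fin s) K} (hD : IsUnit (D * B * Dᵀ)) :
    ∃ M : Matrix (Fin c) (Fin s) K, D * B * Mᵀ = 0 ∧ IsUnit (M * B * Mᵀ) := by
  obtain ⟨M, hMBD, hM⟩ := exists_linearIndependent_rows_mul_eq_zero hrcs.le (B * Dᵀ)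
  have hDM : D * B * Mᵀ = 0 := by
    rw [← neg_eq_zero, ← transpose_mul_mul_transpose_of_skew hB M D, Matrix.mul_assoc, hMBD,
      transpose_zero]
  refine ⟨M, hDM, ?_⟩
  -- `[D; M]` is invertible, hence so is the block-diagonal `[D; M] B [D; M]ᵀ`.
  let e : Fin r ⊕ Fin c ≃ Fin s := finSumFinEquiv.trans (finCongr hrcs)
  have hX : IsUnit ((fromRows D M).submatrix e.symm id) :=
    linearIndependent_rows_iff_isUnit.mp <| (linearIndependent_equiv e.symm).mpr <|
      linearIndependent_rows_fromRows (B * Dᵀ) (by rwa [← Matrix.mul_assoc]) hMBD hM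
  have hXBX := (hX.mul hBu).mul ((isUnit_transpose _).mpr hX)
  rw [submatrix_mul_mul_transpose_submatrix, fromRows_mul_mul_transpose_fromRows hB hDM,
    isUnit_submatrix_equiv] at hXBX
  exact (isUnit_fromBlocks_zero₂₁.mp hXBX).2

theorem exists_mul_mul_transpose_eq_blockJ_two [NeZero (2 : K)] {n : Type*} [Fintype n]
    [DecidableEq n] {B : Matrix n n K} (hB : Bᵀ = -B) (hBu : IsUnit B) (i : n) :
    ∃ U : Matrix (Fin 2) n K, U * B * Uᵀ = blockJ K 2 := by
  let u : n → K := Pi.single i 1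
  have huv : u ⬝ᵥ B *ᵥ (B⁻¹ *ᵥ u) = 1 := by
    rw [mulVec_mulVec, mul_nonsing_inv B ((isUnit_iff_isUnit_det B).mp hBu), one_mulVec]
    simp [u]
  refine ⟨of ![u, B⁻¹ *ᵥ u], ?_⟩
  rw [blockJ_two]
  ext a b
  rw [mul_mul_transpose_apply]
  fin_cases a <;> fin_cases b
  exacts [dotProduct_mulVec_self_of_skew hB _, huv,
    (dotProduct_mulVec_comm_of_skew hB _ _).trans (congrArg Neg.neg huv),
    dotProduct_mulVec_self_of_skew hB _]

theorem exists_mul_mul_transpose_eq_blockJ [NeZero (2 : K)] :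
    ∀ {s : ℕ} (B : Matrix (Fin s) (Fin s) K), Bᵀ = -B → IsUnit B →
      ∃ C : Matrix (Fin s) (Fin s) K, C * B * Cᵀ = blockJ K s
  | 0, _, _, _ => ⟨1, Subsingleton.elim _ _⟩
  | 1, B, hB, hBu => by
    have hB0 : B = 0 := by
      ext i j
      rw [Subsingleton.elim j i, Matrix.zero_apply]
      simpa using dotProduct_mulVec_self_of_skew hB (Pi.single i 1)
    exact absurd (hB0 ▸ hBu) not_isUnit_zero
  | t + 2, B, hB, hBu => by
    obtain ⟨U, hU⟩ := exists_mul_mul_transpose_eq_blockJ_two hB hBu 0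
    obtain ⟨M, hUM, hM⟩ := exists_orthogonal_complement (add_comm 2 t) hB hBu
      (hU ▸ isUnit_blockJ_two_mul 1)
    obtain ⟨C, hC⟩ := exists_mul_mul_transpose_eq_blockJ (M * B * Mᵀ)
      (transpose_mul_mul_transpose_of_skew hB M M) hM
    let e : Fin 2 ⊕ Fin t ≃ Fin (t + 2) := finSumFinEquiv.trans (finCongr (add_comm 2 t))
    refine ⟨(fromRows U (C * M)).submatrix e.symm id, ?_⟩
    rw [submatrix_mul_mul_transpose_submatrix, fromRows_mul_mul_transpose_fromRows_mul hB hUM, hU,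
      hC, ← blockJ_submatrix_finSumFinEquiv (add_comm 2 t) even_two, submatrix_submatrix,
      e.self_comp_symm, submatrix_id_id]

end Field

/-- Any matrix `D_q` with `D_q Θ_w D_qᵀ = Θ_yq` can be completed by an `N` so that the stacked
matrix `Ṽ = [D_q; N]` is symplectic: `Ṽ Θ_w Ṽᵀ = Θ_w`. -/
theorem symplectic_completion (m n_yq : ℕ) (hyq : n_yq ≤ m)
    (Dq : Matrix (Fin (2 * n_yq)) (Fin (2 * m)) ℝ)
    (hDq : Dq * diagJ m * Dqᵀ = diagJ n_yq) :
    ∃ N : Matrix (Fin (2 * m - 2 * n_yq)) (Fin (2 * m)) ℝ,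
      Matrix.fromRows Dq N * diagJ m * (Matrix.fromRows Dq N)ᵀ =
        (diagJ m).submatrix
          (finSumFinEquiv.trans (finCongr (by omega : 2 * n_yq + (2 * m - 2 * n_yq) = 2 * m)))
          (finSumFinEquiv.trans (finCongr (by omega : 2 * n_yq + (2 * m - 2 * n_yq) = 2 * m))) := by
  have hB : (diagJ m)ᵀ = -diagJ m := transpose_blockJ _
  obtain ⟨M, hDM, hM⟩ := exists_orthogonal_complement (c := 2 * m - 2 * n_yq) (by omega) hB
    (isUnit_blockJ_two_mul m) (hDq ▸ isUnit_blockJ_two_mul n_yq : IsUnit (Dq * diagJ m * Dqᵀ))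
  obtain ⟨C, hC⟩ := exists_mul_mul_transpose_eq_blockJ (M * diagJ m * Mᵀ)
    (transpose_mul_mul_transpose_of_skew hB M M) hM
  refine ⟨C * M, ?_⟩
  rw [fromRows_mul_mul_transpose_fromRows_mul hB hDM, hC, hDq, diagJ_eq_blockJ, diagJ_eq_blockJ,
    blockJ_submatrix_finSumFinEquiv _ (even_two_mul n_yq)]
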